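/- Let n ≥ 3 and let W be the n × n Wielandt matrix as above. Then every entry in column n-1 of W^{n^2-3n+3} is positive; that is, for all u ∈ {1,...,n}, (W^{n^2-3n+3}) u (n-1) > 0. -/

import Mathlib

/-!
Read `wielandt n` as the digraph on `Fin n` with arcs `i + 1 → i`, `0 → n - 2` and `0 → n - 1`;
a positive entry of a power is a walk of that length. From `u` walk down to `0` in `u` steps, go
around the two cycles through `0`, of lengths `n` and `n - 1`, and finish with the arc
`0 → n - 2` or with `0 → n - 1 → n - 2`. For `u = 1` the one-arc ending would leave
`n ^ 2 - 3 * n + 1` for the cycles, the Frobenius number of `n` and `n - 1`, so that start needs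
the two-arc ending.
-/

/-- The `n × n` Wielandt matrix: `W i j = 1` iff (`i ≥ 2` and `j = i - 1`) or
(`i = 1` and `j ∈ {n-1, n}`), written here with 0-based indexing via `Fin n`. -/
def wielandt (n : ℕ) : Matrix (Fin n) (Fin n) ℕ := fun i j =>
  if (1 ≤ i.val ∧ j.val + 1 = i.val) ∨ (i.val = 0 ∧ (j.val = n - 2 ∨ j.val = n - 1))
  then 1 else 0

namespace Matrix

variable {ι R : Type*} [Fintype ι]
  [CommSemiring R] [PartialOrder R] [CanonicallyOrderedAdd R] [NoZeroDivisors R]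

theorem mul_apply_pos {A B : Matrix ι ι R} {a b c : ι} (hab : 0 < A a b) (hbc : 0 < B b c) :
    0 < (A * B) a c :=
  (CanonicallyOrderedAdd.mul_pos.2 ⟨hab, hbc⟩).trans_le <|
    Finset.single_le_sum (f := fun j => A a j * B j c) (fun _ _ => zero_le) (Finset.mem_univ b)

variable [DecidableEq ι] {A : Matrix ι ι R}

theorem pow_add_apply_pos {k m : ℕ} {a b c : ι}
    (hab : 0 < (A ^ k) a b) (hbc : 0 < (A ^ m) b c) : 0 < (A ^ (k + m)) a c := by
  rw [pow_add]
  exact mul_apply_pos hab hbc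

theorem one_add_pow_apply_pos {k : ℕ} {a b c : ι}
    (hab : 0 < A a b) (hbc : 0 < (A ^ k) b c) : 0 < (A ^ (1 + k)) a c :=
  pow_add_apply_pos (by rwa [pow_one]) hbc

theorem pow_mul_apply_self_pos {k : ℕ} {a : ι} (ha : 0 < (A ^ k) a a) :
    ∀ p : ℕ, 0 < (A ^ (p * k)) a a
  | 0 => by
    have : Nontrivial R := ⟨⟨_, _, ha.ne'⟩⟩
    simp
  | p + 1 => by
    rw [add_one_mul]
    exact pow_add_apply_pos (pow_mul_apply_self_pos ha p) ha

end Matrix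

open Matrix

section Wielandt

variable {n : ℕ}

theorem wielandt_succ_apply_pos {i : ℕ} (hi : i + 1 < n) :
    0 < wielandt n ⟨i + 1, hi⟩ ⟨i, by omega⟩ := by
  simp [wielandt]

theorem wielandt_zero_apply_pos {j : Fin n} (hj : j.val = n - 2 ∨ j.val = n - 1) :
    0 < wielandt n ⟨0, j.pos⟩ j := by
  simp [wielandt, hj]

theorem wielandt_pow_val_apply_zero_pos (u : Fin n) :
    0 < (wielandt n ^ u.val) u ⟨0, u.pos⟩ := by
  obtain ⟨m, hm⟩ := u
  induction m with
  | zero => simp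
  | succ m ih =>
    rw [pow_succ']
    exact mul_apply_pos (wielandt_succ_apply_pos hm) (ih (by omega))

theorem wielandt_pow_apply_zero_zero_pos (hn : 3 ≤ n) (a b : ℕ) :
    0 < (wielandt n ^ (a * n + b * (n - 1))) ⟨0, by omega⟩ ⟨0, by omega⟩ := by
  have long_cycle : 0 < (wielandt n ^ n) ⟨0, by omega⟩ ⟨0, by omega⟩ := by
    have := one_add_pow_apply_pos (wielandt_zero_apply_pos (j := ⟨n - 1, by omega⟩) (Or.inr rfl))
      (wielandt_pow_val_apply_zero_pos _)
    rwa [show 1 + (n - 1) = n by omega] at this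
  have short_cycle : 0 < (wielandt n ^ (n - 1)) ⟨0, by omega⟩ ⟨0, by omega⟩ := by
    have := one_add_pow_apply_pos (wielandt_zero_apply_pos (j := ⟨n - 2, by omega⟩) (Or.inl rfl))
      (wielandt_pow_val_apply_zero_pos _)
    rwa [show 1 + (n - 2) = n - 1 by omega] at this
  exact pow_add_apply_pos (pow_mul_apply_self_pos long_cycle a)
    (pow_mul_apply_self_pos short_cycle b)

theorem wielandt_pow_apply_zero_penult_pos (hn : 3 ≤ n) {s : ℕ} (hs : s = 1 ∨ s = 2) :
    0 < (wielandt n ^ s) ⟨0, by omega⟩ ⟨n - 2, Nat.sub_lt (by omega) two_pos⟩ := by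
  rcases hs with rfl | rfl
  · rw [pow_one]
    exact wielandt_zero_apply_pos (Or.inl rfl)
  · have last_arc := wielandt_succ_apply_pos (n := n) (i := n - 2) (by omega)
    simp only [show n - 2 + 1 = n - 1 by omega] at last_arc
    exact one_add_pow_apply_pos (wielandt_zero_apply_pos (j := ⟨n - 1, by omega⟩) (Or.inr rfl))
      (by rwa [pow_one])

theorem wielandt_pow_apply_penult_pos (hn : 3 ≤ n) (u : Fin n) (a b : ℕ) {s : ℕ}
    (hs : s = 1 ∨ s = 2) :
    0 < (wielandt n ^ (u.val + (a * n + b * (n - 1)) + s)) u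
      ⟨n - 2, Nat.sub_lt (by omega) two_pos⟩ :=
  pow_add_apply_pos
    (pow_add_apply_pos (wielandt_pow_val_apply_zero_pos u)
      (wielandt_pow_apply_zero_zero_pos hn a b))
    (wielandt_pow_apply_zero_penult_pos hn hs)

end Wielandt

theorem exists_sq_sub_three_mul_add_three_eq {n u : ℕ} (hn : 3 ≤ n) (hu : u < n) :
    ∃ a b s, (s = 1 ∨ s = 2) ∧ n ^ 2 - 3 * n + 3 = u + (a * n + b * (n - 1)) + s := by
  obtain ⟨m, rfl⟩ : ∃ m, n = m + 3 := ⟨n - 3, by omega⟩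
  rw [show (m + 3) ^ 2 - 3 * (m + 3) + 3 = m * (m + 3) + 3 by ring_nf; omega,
    show m + 3 - 1 = m + 2 by omega]
  rcases show u = 0 ∨ u = 1 ∨ 2 ≤ u by omega with rfl | rfl | hu2
  · exact ⟨0, m + 1, 1, Or.inl rfl, by ring⟩
  · exact ⟨m, 0, 2, Or.inr rfl, by ring⟩
  · obtain ⟨v, rfl⟩ : ∃ v, u = v + 2 := ⟨u - 2, by omega⟩
    obtain ⟨w, rfl⟩ : ∃ w, m = v + w := ⟨m - v, by omega⟩
    exact ⟨w, v, 1, Or.inl rfl, by ring⟩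

/-- Every entry in column `n-1` of the `(n^2 - 3n + 3)`-th power of the Wielandt
matrix is positive. -/
theorem wielandt_pow_col_pos (n : ℕ) (hn : 3 ≤ n) :
    ∀ u : Fin n, 0 < (wielandt n ^ (n ^ 2 - 3 * n + 3)) u ⟨n - 2, by omega⟩ := by
  intro u
  obtain ⟨a, b, s, hs, hexp⟩ := exists_sq_sub_three_mul_add_three_eq hn u.isLt
  rw [hexp]
  exact wielandt_pow_apply_penult_pos hn u a b hs
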